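/- Let V = {v_1, …, v_N} ⊆ ℝ^d be a full spark frame, and let a_1, …, a_M ∈ ℝ^d be M mutually distinct vectors. If N ≥ C(M,2)·(d−1) + 1 (where C(M,2) is the binomial coefficient 'M choose 2'), then there exists a vector v_{j_0} ∈ V such that ⟨a_{k_1}, v_{j_0}⟩ ≠ ⟨a_{k_2}, v_{j_0}⟩ for all indices 1 ≤ k_1 < k_2 ≤ M. -/

import Mathlib

open Finset

/-- Dot product on `ℝ^d`. -/
noncomputable def dotp {d : ℕ} (a x : Fin d → ℝ) : ℝ := ∑ i, a i * x i

/-- `v : Fin N → ℝ^d` is a full spark frame: every `d` of the vectors span `ℝ^d`. -/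
def FullSpark {d N : ℕ} (v : Fin N → Fin d → ℝ) : Prop :=
  ∀ S : Finset (Fin N), S.card = d →
    Submodule.span ℝ (↑(S.image v) : Set (Fin d → ℝ)) = ⊤

open Classical in
lemma card_bad {d N : ℕ} (v : Fin N → Fin d → ℝ) (hfs : FullSpark v) {b : Fin d → ℝ}
    (hb : b ≠ 0) :
    (univ.filter (fun j => dotp b (v j) = 0)).card ≤ d - 1 := by
  by_contra h
  push_neg at h
  have hd : d ≤ (univ.filter (fun j => dotp b (v j) = 0)).card := by omega
  obtain ⟨T, hTsub, hTcard⟩ := Finset.exists_subset_card_eq hd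
  have hspan := hfs T hTcard
  set f : (Fin d → ℝ) →ₗ[ℝ] ℝ :=
    { toFun := fun x => dotp b x
      map_add' := by intro x y; simp [dotp, mul_add, Finset.sum_add_distrib]
      map_smul' := by intro c x; simp [dotp, Finset.mul_sum]; ring_nf; simp [mul_comm, mul_assoc, mul_left_comm] }
  have hker : Submodule.span ℝ (↑(T.image v) : Set (Fin d → ℝ)) ≤ LinearMap.ker f := by
    rw [Submodule.span_le]
    intro x hx
    simp only [Finset.coe_image, Set.mem_image, Finset.mem_coe] at hx
    obtain ⟨j, hj, rfl⟩ := hx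
    have := hTsub hj
    simp only [Finset.mem_filter] at this
    exact LinearMap.mem_ker.2 this.2
  rw [hspan, top_le_iff] at hker
  have hfb : f b = 0 := by rw [LinearMap.ker_eq_top] at hker; simp [hker]
  have : ∀ i ∈ (univ : Finset (Fin d)), b i * b i = 0 := by
    rw [← Finset.sum_eq_zero_iff_of_nonneg (fun i _ => mul_self_nonneg (b i))]
    simpa [f, dotp] using hfb
  apply hb
  funext i
  have := this i (Finset.mem_univ i)
  simpa [mul_self_eq_zero] using this

lemma dotp_sub {d : ℕ} (b c x : Fin d → ℝ) : dotp (b - c) x = dotp b x - dotp c x := by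
  simp [dotp, sub_mul, Finset.sum_sub_distrib]

/-- A full spark frame with at least `C(M,2)·(d−1)+1` elements separates the inner
products with any `M` mutually distinct vectors. -/
theorem stmt13 {d N M : ℕ} (v : Fin N → Fin d → ℝ) (hfs : FullSpark v)
    (a : Fin M → Fin d → ℝ) (ha : Function.Injective a)
    (hN : Nat.choose M 2 * (d - 1) + 1 ≤ N) :
    ∃ j0 : Fin N, ∀ k1 k2 : Fin M, k1 ≠ k2 →
      dotp (a k1) (v j0) ≠ dotp (a k2) (v j0) := by
  classical
  set P : Sym2 (Fin M) → Finset (Fin N) :=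
    Sym2.lift ⟨fun p q => univ.filter (fun j => dotp (a p) (v j) = dotp (a q) (v j)),
      fun p q => by ext j; simp [eq_comm]⟩ with hP
  set pairs : Finset (Sym2 (Fin M)) := (univ : Finset (Fin M)).offDiag.image Sym2.mk.uncurry with hpairs
  set bad : Finset (Fin N) := pairs.biUnion P with hbad
  have hcard : bad.card ≤ Nat.choose M 2 * (d - 1) := by
    calc bad.card ≤ ∑ e ∈ pairs, (P e).card := Finset.card_biUnion_le
      _ ≤ ∑ _e ∈ pairs, (d - 1) := by
          apply Finset.sum_le_sum
          intro e he
          induction e with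
          | _ p q =>
            simp only [hpairs, Finset.mem_image] at he
            obtain ⟨x, hx, hxe⟩ := he
            have hpq : p ≠ q := by
              simp only [Function.uncurry_def] at hxe
              rw [Sym2.eq_iff] at hxe
              simp only [Finset.mem_offDiag] at hx
              rcases hxe with ⟨h1, h2⟩ | ⟨h1, h2⟩ <;> subst h1 <;> subst h2 <;>
                [exact hx.2.2; exact fun h => hx.2.2 h.symm]
            have hb : a p - a q ≠ 0 := sub_ne_zero_of_ne (fun h => hpq (ha h))
            have := card_bad v hfs hb
            convert this using 2
            ext j
            simp [hP, dotp_sub, sub_eq_zero]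
            ext j
            simp [hP, dotp_sub, sub_eq_zero]
      _ = pairs.card * (d - 1) := by rw [Finset.sum_const, smul_eq_mul]
      _ = Nat.choose M 2 * (d - 1) := by
          rw [hpairs, Sym2.card_image_offDiag]; simp
  have hlt : bad.card < N := by omega
  have : ∃ j0 : Fin N, j0 ∉ bad := by
    by_contra h
    push_neg at h
    have : (univ : Finset (Fin N)) ⊆ bad := fun j _ => h j
    have := Finset.card_le_card this
    simp at this
    omega
  obtain ⟨j0, hj0⟩ := this
  refine ⟨j0, fun k1 k2 hne heq => hj0 ?_⟩
  rw [hbad, Finset.mem_biUnion]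
  refine ⟨Sym2.mk k1 k2, ?_, ?_⟩
  · rw [hpairs, Finset.mem_image]
    exact ⟨(k1, k2), Finset.mem_offDiag.2 ⟨Finset.mem_univ _, Finset.mem_univ _, hne⟩, rfl⟩
  · simp [hP, heq]
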